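/- Every edge contained in a left-augmented or a right-augmented alternating path in G with respect to M is allowed. -/
import Mathlib


/-- A set of edges (pairs (i,j), meaning the edge (v_i, v'_j) of a bipartite graph)
is a matching if its edges are pairwise non-adjacent. -/
def IsMatching (M : Finset (ℕ × ℕ)) : Prop :=
  ∀ e ∈ M, ∀ f ∈ M, e ≠ f → e.1 ≠ f.1 ∧ e.2 ≠ f.2

/-- A matching in the graph with edge set `E`. -/
def IsMatchingIn (E M : Finset (ℕ × ℕ)) : Prop :=
  M ⊆ E ∧ IsMatching M

/-- A maximum (cardinality) matching in the graph with edge set `E`. -/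
def IsMaxMatching (E M : Finset (ℕ × ℕ)) : Prop :=
  IsMatchingIn E M ∧ ∀ M', IsMatchingIn E M' → M'.card ≤ M.card

/-- An edge is allowed if it is included in some maximum matching. -/
def Allowed (E : Finset (ℕ × ℕ)) (e : ℕ × ℕ) : Prop :=
  ∃ M, IsMaxMatching E M ∧ e ∈ M

/-- The matching `{(v_0,v'_0),...,(v_{t-1},v'_{t-1})}` (0-based indexing). -/
def diagM (t : ℕ) : Finset (ℕ × ℕ) :=
  (Finset.range t).image (fun i => (i, i))

/-- An upper alternating path with respect to the maximum matching `diagM t`: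
a set `P` of `ℓ - 1 ≥ 1` upper edges on `ℓ` distinct indices
`f 0, ..., f (ℓ-1) < t`, the edges being `(f 0, f 1), ..., (f (ℓ-2), f (ℓ-1))`. -/
def IsUpperAltPath (t : ℕ) (E : Finset (ℕ × ℕ)) (ℓ : ℕ) (f : ℕ → ℕ)
    (P : Finset (ℕ × ℕ)) : Prop :=
  2 ≤ ℓ ∧ Set.InjOn f (Set.Iio ℓ) ∧ (∀ k < ℓ, f k < t) ∧
    P = (Finset.range (ℓ - 1)).image (fun k => (f k, f (k + 1))) ∧ P ⊆ E

/-- A left-augmented alternating path: an upper alternating path `P`, augmented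
on the left by a lower edge `(v_{i0}, v'_{f 0})` with `i0 ≥ t`. -/
def IsLeftAugPath (t : ℕ) (E Q : Finset (ℕ × ℕ)) : Prop :=
  ∃ ℓ f P i0, IsUpperAltPath t E ℓ f P ∧ t ≤ i0 ∧ (i0, f 0) ∈ E ∧
    Q = insert (i0, f 0) P

/-- A right-augmented alternating path: an upper alternating path `P`, augmented
on the right by a lower edge `(v_{f (ℓ-1)}, v'_r)` with `r ≥ t`. -/
def IsRightAugPath (t : ℕ) (E Q : Finset (ℕ × ℕ)) : Prop :=
  ∃ ℓ f P r, IsUpperAltPath t E ℓ f P ∧ t ≤ r ∧ (f (ℓ - 1), r) ∈ E ∧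
    Q = insert (f (ℓ - 1), r) P

lemma diagM_card (t : ℕ) : (diagM t).card = t := by
  rw [diagM, Finset.card_image_of_injective _ (fun a b h => by simpa using congrArg Prod.fst h),
    Finset.card_range]

lemma mem_diagM {t : ℕ} {e : ℕ × ℕ} : e ∈ diagM t ↔ ∃ j, j < t ∧ e = (j, j) := by
  simp [diagM, Finset.mem_image, eq_comm]

lemma aux_allowed (t ℓ : ℕ) (E : Finset (ℕ × ℕ)) (hM : IsMaxMatching E (diagM t))
    (f : ℕ → ℕ) (hℓ : 2 ≤ ℓ) (hinj : Set.InjOn f (Set.Iio ℓ))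
    (hft : ∀ k < ℓ, f k < t) (e0 : ℕ × ℕ) (he0 : e0 ∈ E)
    (hPE : ∀ k < ℓ - 1, (f k, f (k + 1)) ∈ E)
    (h0a : ∀ j < t, (∀ k < ℓ, f k ≠ j) → e0.1 ≠ j ∧ e0.2 ≠ j)
    (h0b : ∀ k < ℓ - 1, e0.1 ≠ f k ∧ e0.2 ≠ f (k + 1)) :
    ∀ e ∈ insert e0 ((Finset.range (ℓ - 1)).image fun k => (f k, f (k + 1))),
      Allowed E e := by
  have hfne : ∀ k k', k < ℓ → k' < ℓ → k ≠ k' → f k ≠ f k' := by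
    intro k k' hk hk' hkk h
    exact hkk (hinj hk hk' h)
  set P : Finset (ℕ × ℕ) := (Finset.range (ℓ - 1)).image fun k => (f k, f (k + 1)) with hP
  set Q : Finset (ℕ × ℕ) := insert e0 P with hQ
  set D : Finset (ℕ × ℕ) := (Finset.range ℓ).image fun k => (f k, f k) with hD
  set M' : Finset (ℕ × ℕ) := (diagM t \ D) ∪ Q with hM'
  -- membership characterization
  have hchar : ∀ e ∈ M',
      (∃ j, j < t ∧ (∀ k < ℓ, f k ≠ j) ∧ e = (j, j)) ∨ e = e0 ∨
        ∃ k, k < ℓ - 1 ∧ e = (f k, f (k + 1)) := by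
    intro e he
    rcases Finset.mem_union.mp he with h | h
    · left
      obtain ⟨hd, hnd⟩ := Finset.mem_sdiff.mp h
      obtain ⟨j, hj, rfl⟩ := mem_diagM.mp hd
      refine ⟨j, hj, ?_, rfl⟩
      intro k hk hfk
      apply hnd
      rw [hD, Finset.mem_image]
      exact ⟨k, Finset.mem_range.mpr hk, by rw [hfk]⟩
    · rcases Finset.mem_insert.mp h with h | h
      · exact Or.inr (Or.inl h)
      · right; right
        simpa [hP, Finset.mem_image, eq_comm] using h
  -- M' is a matching
  have hmatch : IsMatching M' := by
    intro e he e' he' hne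
    rcases hchar e he with ⟨j, hj, hfj, rfl⟩ | rfl | ⟨k, hk, rfl⟩ <;>
      rcases hchar e' he' with ⟨j', hj', hfj', rfl⟩ | rfl | ⟨k', hk', rfl⟩
    · constructor <;> · simp only [ne_eq]; intro h; exact hne (by simp [h])
    · have := h0a j hj hfj
      exact ⟨fun h => this.1 h.symm, fun h => this.2 h.symm⟩
    · exact ⟨(hfj k' (by omega)).symm, (hfj (k' + 1) (by omega)).symm⟩
    · exact h0a j' hj' hfj'
    · exact absurd rfl hne
    · exact h0b k' hk'
    · exact ⟨hfj' k (by omega), hfj' (k + 1) (by omega)⟩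
    · have := h0b k hk
      exact ⟨Ne.symm this.1, Ne.symm this.2⟩
    · have hkk : k ≠ k' := fun h => hne (by simp [h])
      exact ⟨hfne k k' (by omega) (by omega) hkk,
        hfne (k + 1) (k' + 1) (by omega) (by omega) (by omega)⟩
  -- cardinalities
  have hPcard : P.card = ℓ - 1 := by
    rw [hP, Finset.card_image_of_injOn, Finset.card_range]
    intro k hk k' hk' h
    simp only [Finset.coe_range, Set.mem_Iio] at hk hk'
    by_contra hkk
    exact hfne k k' (by omega) (by omega) hkk (congrArg Prod.fst h)
  have he0P : e0 ∉ P := by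
    intro h
    rw [hP, Finset.mem_image] at h
    obtain ⟨k, hk, hke⟩ := h
    simp only [Finset.mem_range] at hk
    exact (h0b k hk).1 (by rw [← hke])
  have hQcard : Q.card = ℓ := by
    rw [hQ, Finset.card_insert_of_notMem he0P, hPcard]; omega
  have hDdiag : D ⊆ diagM t := by
    intro e he
    rw [hD, Finset.mem_image] at he
    obtain ⟨k, hk, rfl⟩ := he
    simp only [Finset.mem_range] at hk
    exact mem_diagM.mpr ⟨f k, hft k hk, rfl⟩
  have hDcard : D.card = ℓ := by
    rw [hD, Finset.card_image_of_injOn, Finset.card_range]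
    intro k hk k' hk' h
    simp only [Finset.coe_range, Set.mem_Iio] at hk hk'
    by_contra hkk
    exact hfne k k' hk hk' hkk (congrArg Prod.fst h)
  have hℓt : ℓ ≤ t := by
    have := Finset.card_le_card hDdiag
    rwa [hDcard, diagM_card] at this
  have hdisj : Disjoint (diagM t \ D) Q := by
    rw [Finset.disjoint_left]
    intro e he heQ
    obtain ⟨hd, hnd⟩ := Finset.mem_sdiff.mp he
    obtain ⟨j, hj, rfl⟩ := mem_diagM.mp hd
    have hfj : ∀ k < ℓ, f k ≠ j := by
      intro k hk hfk
      apply hnd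
      rw [hD, Finset.mem_image]
      exact ⟨k, Finset.mem_range.mpr hk, by rw [hfk]⟩
    rcases Finset.mem_insert.mp heQ with h | h
    · exact (h0a j hj hfj).1 (by rw [← h])
    · rw [hP, Finset.mem_image] at h
      obtain ⟨k, hk, hke⟩ := h
      simp only [Finset.mem_range] at hk
      exact hfj k (by omega) (congrArg Prod.fst hke)
  have hMcard : M'.card = t := by
    rw [hM', Finset.card_union_of_disjoint hdisj, Finset.card_sdiff_of_subset hDdiag,
      diagM_card, hDcard, hQcard]
    omega
  -- M' ⊆ E
  have hQE : Q ⊆ E := by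
    rw [hQ]
    refine Finset.insert_subset he0 ?_
    intro e he
    rw [hP, Finset.mem_image] at he
    obtain ⟨k, hk, rfl⟩ := he
    exact hPE k (Finset.mem_range.mp hk)
  have hME : M' ⊆ E := by
    rw [hM']
    exact Finset.union_subset (fun e he => hM.1.1 (Finset.mem_sdiff.mp he).1) hQE
  -- M' is a maximum matching
  have hmax : IsMaxMatching E M' := by
    refine ⟨⟨hME, hmatch⟩, fun M'' hM'' => ?_⟩
    have := hM.2 M'' hM''
    rw [diagM_card] at this
    omega
  intro e he
  exact ⟨M', hmax, Finset.mem_union_right _ he⟩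

/-- every edge contained in a left-augmented or a right-augmented
alternating path with respect to `M = diagM t` is allowed. -/
theorem mem_augPath_allowed (n1 n2 t : ℕ) (E : Finset (ℕ × ℕ)) (hn : n1 ≤ n2)
    (hE : E ⊆ Finset.range n1 ×ˢ Finset.range n2)
    (hM : IsMaxMatching E (diagM t)) :
    ∀ Q, (IsLeftAugPath t E Q ∨ IsRightAugPath t E Q) →
      ∀ e ∈ Q, Allowed E e := by
  rintro Q (⟨ℓ, f, P, i0, ⟨hℓ, hinj, hft, hPeq, hPE⟩, hi0, heE, rfl⟩ |
    ⟨ℓ, f, P, r, ⟨hℓ, hinj, hft, hPeq, hPE⟩, hr, heE, rfl⟩)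
  · subst hPeq
    refine aux_allowed t ℓ E hM f hℓ hinj hft (i0, f 0) heE
      (fun k hk => hPE (Finset.mem_image_of_mem _ (Finset.mem_range.mpr hk))) ?_ ?_
    · intro j hj hfj
      exact ⟨by simp; omega, hfj 0 (by omega)⟩
    · intro k hk
      have h1 := hft k (by omega)
      have h2 : f 0 ≠ f (k + 1) := fun h => by
        have := hinj (Set.mem_Iio.mpr (by omega : (0:ℕ) < ℓ))
          (Set.mem_Iio.mpr (by omega : k + 1 < ℓ)) h
        omega
      exact ⟨by simp; omega, h2⟩
  · subst hPeq
    refine aux_allowed t ℓ E hM f hℓ hinj hft (f (ℓ - 1), r) heE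
      (fun k hk => hPE (Finset.mem_image_of_mem _ (Finset.mem_range.mpr hk))) ?_ ?_
    · intro j hj hfj
      exact ⟨hfj (ℓ - 1) (by omega), by simp; omega⟩
    · intro k hk
      have h1 := hft (k + 1) (by omega)
      have h2 : f (ℓ - 1) ≠ f k := fun h => by
        have := hinj (Set.mem_Iio.mpr (by omega : ℓ - 1 < ℓ))
          (Set.mem_Iio.mpr (by omega : k < ℓ)) h
        omega
      exact ⟨h2, by simp; omega⟩
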